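/- Let α > 0 and u(t, e^{ix}) = b(t) + c(t)e^{ix}/(1-p(t)e^{ix}) be the explicit solution with b(t) = (√α - i(e^{2√α t}-1)/(e^{2√α t}+1))e^{-i(1+2α)t}, c(t) = 4e^{2√α t}(1+e^{2√α t})^{-2}e^{-i(1+2α)t}, p(t) = -i(e^{2√α t}-1)/(e^{2√α t}+1). Then for every x ∈ [-π, π] with x ≠ π/2, |c(t)|/|1 - p(t)e^{ix}| → 0 as t → +∞, while at x = π/2 it does not tend to 0; that is, the modulus |u| concentrates at the point i ∈ S^1 as t → ∞. -/

import Mathlib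

open Filter

/-- `e^{2√α t}`. -/
noncomputable def expo (α t : ℝ) : ℝ := Real.exp (2 * Real.sqrt α * t)

/-- Explicit solution: `c(t) = 4e^{2√α t}(1+e^{2√α t})^{-2} e^{-i(1+2α)t}`. -/
noncomputable def cfun (α t : ℝ) : ℂ :=
  ((4 * expo α t / (1 + expo α t) ^ 2 : ℝ) : ℂ) *
    Complex.exp (-Complex.I * ((1 + 2 * α : ℝ) : ℂ) * (t : ℂ))

/-- Explicit solution: `p(t) = -i(e^{2√α t}-1)/(e^{2√α t}+1)`. -/
noncomputable def pfun (α t : ℝ) : ℂ :=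
  -Complex.I * (((expo α t - 1) / (expo α t + 1) : ℝ) : ℂ)

lemma expo_pos (α t : ℝ) : 0 < expo α t := Real.exp_pos _

lemma norm_cfun (α t : ℝ) : ‖cfun α t‖ = 4 * expo α t / (1 + expo α t) ^ 2 := by
  have h1 : ‖Complex.exp (-Complex.I * ((1 + 2 * α : ℝ) : ℂ) * (t : ℂ))‖ = 1 := by
    rw [Complex.norm_exp]; simp
  rw [cfun, norm_mul, h1, mul_one, Complex.norm_real, Real.norm_eq_abs, abs_of_nonneg]
  have := expo_pos α t
  positivity

lemma re_eq (α t x : ℝ) : (1 - pfun α t * Complex.exp ((x:ℂ) * Complex.I)).re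
    = 1 - (expo α t - 1) / (expo α t + 1) * Real.sin x := by
  set r := (expo α t - 1) / (expo α t + 1) with hr
  simp [pfun, ← hr, Complex.exp_mul_I, Complex.mul_re, Complex.mul_im,
    Complex.cos_ofReal_re, Complex.sin_ofReal_re]
  ring

lemma expo_tendsto (α : ℝ) (hα : 0 < α) : Tendsto (expo α) atTop atTop := by
  apply Real.tendsto_exp_atTop.comp
  exact Tendsto.const_mul_atTop (by positivity) tendsto_id

lemma norm_cfun_tendsto (α : ℝ) (hα : 0 < α) :
    Tendsto (fun t => ‖cfun α t‖) atTop (nhds 0) := by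
  have h4 : Tendsto (fun t => 4 / expo α t) atTop (nhds 0) :=
    tendsto_const_nhds.div_atTop (expo_tendsto α hα)
  apply squeeze_zero (fun t => norm_nonneg _) (fun t => ?_) h4
  rw [norm_cfun]
  have hE := expo_pos α t
  rw [div_le_div_iff₀ (by positivity) hE]
  nlinarith

/-- Concentration at the point `i ∈ S¹`: along the explicit solution
`u(t, e^{ix}) = b(t) + c(t)e^{ix}/(1-p(t)e^{ix})` of the α-Szegő equation with
`u₀ = z + √α`, for every `x ∈ [-π, π]` with `x ≠ π/2` the quantity
`|c(t)|/|1 - p(t)e^{ix}|` tends to `0` as `t → +∞`, while at `x = π/2` it does not. -/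
theorem stmt19 (α : ℝ) (hα : 0 < α) :
    (∀ x : ℝ, x ∈ Set.Icc (-Real.pi) Real.pi → x ≠ Real.pi / 2 →
      Tendsto (fun t : ℝ =>
          ‖cfun α t‖ / ‖1 - pfun α t * Complex.exp ((x : ℂ) * Complex.I)‖)
        atTop (nhds 0)) ∧
    ¬ Tendsto (fun t : ℝ =>
        ‖cfun α t‖ / ‖1 - pfun α t * Complex.exp (((Real.pi / 2 : ℝ) : ℂ) * Complex.I)‖)
      atTop (nhds 0) := by
  have hpi := Real.pi_pos
  constructor
  · intro x hx hxne
    -- sin x < 1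
    have hs1 : Real.sin x < 1 := by
      rcases lt_or_eq_of_le (Real.sin_le_one x) with h | h
      · exact h
      · exfalso
        obtain ⟨k, hk⟩ := Real.sin_eq_one_iff.mp h
        obtain ⟨hx1, hx2⟩ := hx
        have hk0 : (k : ℝ) = 0 := by
          have h1 : -(1:ℝ) < k := by nlinarith
          have h2 : (k:ℝ) < 1 := by nlinarith
          have h1' : -1 < k := by exact_mod_cast h1
          have h2' : k < 1 := by exact_mod_cast h2
          have : k = 0 := by omega
          exact_mod_cast this
        apply hxne
        rw [← hk, hk0]; ring
    set m : ℝ := min (1 - Real.sin x) 1 with hm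
    have hm0 : 0 < m := lt_min (by linarith) one_pos
    apply squeeze_zero' (Eventually.of_forall fun t => by positivity)
      ?_ (by simpa using (norm_cfun_tendsto α hα).div_const m)
    filter_upwards [eventually_ge_atTop (0:ℝ)] with t ht
    have hE : 1 ≤ expo α t := by
      rw [expo]; nlinarith [Real.exp_le_exp.mpr (by positivity : 2 * Real.sqrt α * t ≥ 0),
        Real.one_le_exp (by positivity : (0:ℝ) ≤ 2 * Real.sqrt α * t)]
    set r := (expo α t - 1) / (expo α t + 1) with hr
    have hr0 : 0 ≤ r := div_nonneg (by linarith) (by linarith)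
    have hr1 : r ≤ 1 := by
      rw [hr, div_le_one (by linarith)]; linarith
    have hlow : m ≤ ‖1 - pfun α t * Complex.exp ((x:ℂ) * Complex.I)‖ := by
      calc m ≤ 1 - r * Real.sin x := by
              rcases le_or_gt 0 (Real.sin x) with h | h
              · have : r * Real.sin x ≤ Real.sin x := by nlinarith
                have := min_le_left (1 - Real.sin x) 1
                linarith
              · have : r * Real.sin x ≤ 0 := mul_nonpos_of_nonneg_of_nonpos hr0 h.le
                have := min_le_right (1 - Real.sin x) 1
                linarith
        _ = (1 - pfun α t * Complex.exp ((x:ℂ) * Complex.I)).re := (re_eq α t x).symm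
        _ ≤ ‖1 - pfun α t * Complex.exp ((x:ℂ) * Complex.I)‖ := Complex.re_le_norm _
    exact div_le_div_of_nonneg_left (norm_nonneg _) hm0 hlow
  · intro hcon
    -- at x = π/2, exp(i π/2) = I and the denominator is 1 - r
    have key : ∀ t : ℝ, 0 ≤ t →
        1 ≤ ‖cfun α t‖ / ‖1 - pfun α t * Complex.exp (((Real.pi / 2 : ℝ) : ℂ) * Complex.I)‖ := by
      intro t ht
      have hE : 1 ≤ expo α t := Real.one_le_exp (by positivity)
      have hexpI : Complex.exp (((Real.pi / 2 : ℝ) : ℂ) * Complex.I) = Complex.I := by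
        rw [Complex.exp_mul_I]
        push_cast
        rw [Complex.cos_pi_div_two, Complex.sin_pi_div_two]
        ring
      have hden : 1 - pfun α t * Complex.exp (((Real.pi / 2 : ℝ) : ℂ) * Complex.I)
          = ((2 / (expo α t + 1) : ℝ) : ℂ) := by
        rw [hexpI, pfun]
        have hne : (expo α t + 1 : ℝ) ≠ 0 := by positivity
        have h : ((expo α t : ℂ) + 1) ≠ 0 := by exact_mod_cast hne
        push_cast
        field_simp
        ring_nf
        simp [Complex.I_sq]
        ring
      rw [hden, norm_cfun, Complex.norm_real, Real.norm_eq_abs,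
        abs_of_pos (by positivity : (0:ℝ) < 2 / (expo α t + 1))]
      rw [le_div_iff₀ (by positivity), one_mul, div_le_div_iff₀ (by positivity)
        (by positivity)]
      nlinarith
    have h1 := hcon.eventually (gt_mem_nhds (by norm_num : (0:ℝ) < 1))
    obtain ⟨t, ht1, ht2⟩ := (h1.and (eventually_ge_atTop (0:ℝ))).exists
    exact absurd (key t ht2) (not_le.mpr ht1)
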